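/- arXiv:2105.09884 — 5 statements merged into one kernel-verified Lean document; each statement's English description precedes it below -/
import Mathlib

section
/- Let x₁ and x₂ be real-valued random variables on the same probability space (possibly dependent) with x₁ ~ subW(θ₁, ν₁) and x₂ ~ subW(θ₂, ν₂), where θ₁, θ₂ > 0. Then x₁ x₂ ~ subW(θ₁ + θ₂, c(θ₁, θ₂) ν₁ ν₂), where c(θ₁, θ₂) := (θ₁ + θ₂)^{θ₁ + θ₂} / (θ₁^{θ₁} θ₂^{θ₂}); that is, ‖x₁ x₂‖_k ≤ c(θ₁, θ₂) ν₁ ν₂ k^{θ₁ + θ₂} for all real k ≥ 1. -/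
/-!
Hölder's inequality with the conjugate exponents `p = (θ₁ + θ₂) / θ₁` and `q = (θ₁ + θ₂) / θ₂`
gives `‖x₁ x₂‖_k ≤ ‖x₁‖_{kp} ‖x₂‖_{kq} ≤ ν₁ ν₂ (kp)^θ₁ (kq)^θ₂`, and these exponents are chosen so
that `(kp)^θ₁ (kq)^θ₂ = c(θ₁, θ₂) k^(θ₁ + θ₂)`.
-/

open MeasureTheory Real

namespace Real

lemma holderConjugate_add_div {a b : ℝ} (ha : 0 < a) (hb : 0 < b) :
    ((a + b) / a).HolderConjugate ((a + b) / b) := by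
  have hab : 0 < a + b := add_pos ha hb
  simpa only [inv_div] using
    HolderConjugate.inv_inv (div_pos ha hab) (div_pos hb hab) (by field_simp)

lemma mul_add_div_rpow_mul_mul_add_div_rpow {a b k : ℝ} (ha : 0 < a) (hb : 0 < b) (hk : 0 ≤ k) :
    (k * ((a + b) / a)) ^ a * (k * ((a + b) / b)) ^ b
      = (a + b) ^ (a + b) / (a ^ a * b ^ b) * k ^ (a + b) := by
  have hab : 0 < a + b := add_pos ha hb
  rw [mul_rpow hk (div_pos hab ha).le, mul_rpow hk (div_pos hab hb).le,
    div_rpow hab.le ha.le, div_rpow hab.le hb.le, rpow_add' hk hab.ne', rpow_add hab]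
  have : 0 < a ^ a := rpow_pos_of_pos ha a
  have : 0 < b ^ b := rpow_pos_of_pos hb b
  field_simp

end Real

section Moments

variable {Ω : Type*} [MeasurableSpace Ω] {μ : Measure Ω}

noncomputable def momentNorm (μ : Measure Ω) (x : Ω → ℝ) (k : ℝ) : ℝ :=
  (∫ ω, |x ω| ^ k ∂μ) ^ (1 / k)

lemma momentNorm_nonneg (x : Ω → ℝ) (k : ℝ) : 0 ≤ momentNorm μ x k :=
  rpow_nonneg (integral_nonneg fun _ => by positivity) _

lemma memLp_abs_rpow_of_integrable {x : Ω → ℝ} {k p : ℝ} (hp : 0 < p)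
    (hint : Integrable (fun ω => |x ω| ^ (k * p)) μ) :
    MemLp (fun ω => |x ω| ^ k) (ENNReal.ofReal p) μ := by
  have hmeas : AEStronglyMeasurable (fun ω => |x ω| ^ k) μ := by
    refine ((continuous_rpow_const (one_div_pos.2 hp).le).comp_aestronglyMeasurable
      hint.aestronglyMeasurable).congr (ae_of_all _ fun ω => ?_)
    dsimp only
    rw [← rpow_mul (abs_nonneg _), mul_assoc, mul_one_div_cancel hp.ne', mul_one]
  rw [← integrable_norm_rpow_iff hmeas (by simpa using hp) ENNReal.ofReal_ne_top,
    ENNReal.toReal_ofReal hp.le]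
  refine hint.congr (ae_of_all _ fun ω => ?_)
  dsimp only
  rw [norm_of_nonneg (by positivity), ← rpow_mul (abs_nonneg _)]

lemma momentNorm_mul_le {x y : Ω → ℝ} {k p q : ℝ} (hk : 0 < k) (hpq : p.HolderConjugate q)
    (hx : Integrable (fun ω => |x ω| ^ (k * p)) μ)
    (hy : Integrable (fun ω => |y ω| ^ (k * q)) μ) :
    momentNorm μ (x * y) k ≤ momentNorm μ x (k * p) * momentNorm μ y (k * q) := by
  have hp := hpq.pos
  have hq := hpq.symm.pos
  have holder := integral_mul_le_Lp_mul_Lq_of_nonneg hpq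
    (ae_of_all _ fun ω => by positivity) (ae_of_all _ fun ω => by positivity)
    (memLp_abs_rpow_of_integrable hp hx) (memLp_abs_rpow_of_integrable hq hy)
  simp only [← rpow_mul (abs_nonneg _)] at holder
  have hA : 0 ≤ ∫ ω, |x ω| ^ (k * p) ∂μ := integral_nonneg fun _ => by positivity
  have hB : 0 ≤ ∫ ω, |y ω| ^ (k * q) ∂μ := integral_nonneg fun _ => by positivity
  calc momentNorm μ (x * y) k = (∫ ω, |x ω| ^ k * |y ω| ^ k ∂μ) ^ (1 / k) := by
        simp only [momentNorm, Pi.mul_apply, abs_mul, mul_rpow (abs_nonneg _) (abs_nonneg _)]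
    _ ≤ ((∫ ω, |x ω| ^ (k * p) ∂μ) ^ (1 / p) * (∫ ω, |y ω| ^ (k * q) ∂μ) ^ (1 / q)) ^ (1 / k) :=
        rpow_le_rpow (integral_nonneg fun _ => by positivity) holder (by positivity)
    _ = momentNorm μ x (k * p) * momentNorm μ y (k * q) := by
        rw [mul_rpow (by positivity) (by positivity), ← rpow_mul hA, ← rpow_mul hB]
        simp only [momentNorm, one_div, mul_inv, mul_comm]

end Moments

theorem subWeibull_mul_dep_general
    {Ω : Type*} [MeasurableSpace Ω] (μ : Measure Ω)
    (x₁ x₂ : Ω → ℝ)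
    (θ₁ θ₂ ν₁ ν₂ : ℝ) (hθ₁ : 0 < θ₁) (hθ₂ : 0 < θ₂)
    (hmom₁ : ∀ k : ℝ, 1 ≤ k → Integrable (fun ω => |x₁ ω| ^ k) μ)
    (hmom₂ : ∀ k : ℝ, 1 ≤ k → Integrable (fun ω => |x₂ ω| ^ k) μ)
    (hsw₁ : ∀ k : ℝ, 1 ≤ k → (∫ ω, |x₁ ω| ^ k ∂μ) ^ (1 / k) ≤ ν₁ * k ^ θ₁)
    (hsw₂ : ∀ k : ℝ, 1 ≤ k → (∫ ω, |x₂ ω| ^ k ∂μ) ^ (1 / k) ≤ ν₂ * k ^ θ₂) :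
    ∀ k : ℝ, 1 ≤ k →
      (∫ ω, |x₁ ω * x₂ ω| ^ k ∂μ) ^ (1 / k)
        ≤ ((θ₁ + θ₂) ^ (θ₁ + θ₂) / (θ₁ ^ θ₁ * θ₂ ^ θ₂)) * ν₁ * ν₂ * k ^ (θ₁ + θ₂) := by
  intro k hk
  have hpq := holderConjugate_add_div hθ₁ hθ₂
  have hkp : 1 ≤ k * ((θ₁ + θ₂) / θ₁) := one_le_mul_of_one_le_of_one_le hk hpq.lt.le
  have hkq : 1 ≤ k * ((θ₁ + θ₂) / θ₂) := one_le_mul_of_one_le_of_one_le hk hpq.symm.lt.le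
  calc momentNorm μ (x₁ * x₂) k
      ≤ momentNorm μ x₁ (k * ((θ₁ + θ₂) / θ₁)) * momentNorm μ x₂ (k * ((θ₁ + θ₂) / θ₂)) :=
        momentNorm_mul_le (zero_lt_one.trans_le hk) hpq (hmom₁ _ hkp) (hmom₂ _ hkq)
    _ ≤ ν₁ * (k * ((θ₁ + θ₂) / θ₁)) ^ θ₁ * (ν₂ * (k * ((θ₁ + θ₂) / θ₂)) ^ θ₂) :=
        mul_le_mul (hsw₁ _ hkp) (hsw₂ _ hkq) (momentNorm_nonneg _ _)
          ((momentNorm_nonneg _ _).trans (hsw₁ _ hkp))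
    _ = _ := by
        rw [mul_mul_mul_comm, mul_add_div_rpow_mul_mul_add_div_rpow hθ₁ hθ₂ (by positivity)]
        ring

/-- **Closure of the sub-Weibull class under products (possibly dependent factors).**
If `x₁ ~ subW(θ₁, ν₁)` and `x₂ ~ subW(θ₂, ν₂)` with `θ₁, θ₂ > 0` (possibly dependent), then
`x₁ x₂ ~ subW(θ₁ + θ₂, c(θ₁,θ₂) ν₁ ν₂)` with
`c(θ₁,θ₂) = (θ₁+θ₂)^(θ₁+θ₂) / (θ₁^θ₁ θ₂^θ₂)`. -/
theorem subWeibull_mul_dep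
    {Ω : Type*} [MeasurableSpace Ω] (μ : Measure Ω) [IsProbabilityMeasure μ]
    (x₁ x₂ : Ω → ℝ) (hx₁ : Measurable x₁) (hx₂ : Measurable x₂)
    (θ₁ θ₂ ν₁ ν₂ : ℝ) (hθ₁ : 0 < θ₁) (hθ₂ : 0 < θ₂) (hν₁ : 0 < ν₁) (hν₂ : 0 < ν₂)
    (hmom₁ : ∀ k : ℝ, 1 ≤ k → Integrable (fun ω => |x₁ ω| ^ k) μ)
    (hmom₂ : ∀ k : ℝ, 1 ≤ k → Integrable (fun ω => |x₂ ω| ^ k) μ)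
    (hsw₁ : ∀ k : ℝ, 1 ≤ k → (∫ ω, |x₁ ω| ^ k ∂μ) ^ (1 / k) ≤ ν₁ * k ^ θ₁)
    (hsw₂ : ∀ k : ℝ, 1 ≤ k → (∫ ω, |x₂ ω| ^ k ∂μ) ^ (1 / k) ≤ ν₂ * k ^ θ₂) :
    ∀ k : ℝ, 1 ≤ k →
      (∫ ω, |x₁ ω * x₂ ω| ^ k ∂μ) ^ (1 / k)
        ≤ ((θ₁ + θ₂) ^ (θ₁ + θ₂) / (θ₁ ^ θ₁ * θ₂ ^ θ₂)) * ν₁ * ν₂ * k ^ (θ₁ + θ₂) :=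
  subWeibull_mul_dep_general μ x₁ x₂ θ₁ θ₂ ν₁ ν₂ hθ₁ hθ₂ hmom₁ hmom₂ hsw₁ hsw₂
end

section
/- Let x be a real-valued random variable with x ~ subW(θ, ν) and let a > 0. Then |x|^a ~ subW(aθ, ν^a max{1, a^{aθ}}); that is, ‖|x|^a‖_k ≤ ν^a max{1, a^{aθ}} k^{aθ} for all real k ≥ 1. -/
open MeasureTheory ProbabilityTheory Real

/-- **Closure of the sub-Weibull class under powers.**
If `x ~ subW(θ, ν)` and `a > 0`, then `|x|^a ~ subW(aθ, ν^a max{1, a^(aθ)})`, i.e.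
`‖|x|^a‖_k ≤ ν^a max{1, a^(aθ)} k^(aθ)` for all real `k ≥ 1`. -/
theorem subWeibull_pow
    {Ω : Type*} [MeasurableSpace Ω] (μ : Measure Ω) [IsProbabilityMeasure μ]
    (x : Ω → ℝ) (hx : Measurable x)
    (θ ν : ℝ) (hθ : 0 ≤ θ) (hν : 0 < ν)
    (hmom : ∀ k : ℝ, 1 ≤ k → Integrable (fun ω => |x ω| ^ k) μ)
    (hsw : ∀ k : ℝ, 1 ≤ k → (∫ ω, |x ω| ^ k ∂μ) ^ (1 / k) ≤ ν * k ^ θ)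
    (a : ℝ) (ha : 0 < a) :
    ∀ k : ℝ, 1 ≤ k →
      (∫ ω, (|x ω| ^ a) ^ k ∂μ) ^ (1 / k)
        ≤ ν ^ a * max 1 (a ^ (a * θ)) * k ^ (a * θ) := by
  intro k hk
  have hk0 : 0 < k := lt_of_lt_of_le one_pos hk
  have hak : 0 < a * k := mul_pos ha hk0
  have hrw : (∫ ω, (|x ω| ^ a) ^ k ∂μ) = ∫ ω, |x ω| ^ (a * k) ∂μ := by
    congr 1; funext ω; rw [Real.rpow_mul (abs_nonneg _)]
  rw [hrw]
  have hInonneg : 0 ≤ ∫ ω, |x ω| ^ (a * k) ∂μ :=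
    integral_nonneg fun ω => Real.rpow_nonneg (abs_nonneg _) _
  have hkθ : (1 : ℝ) ≤ k ^ (a * θ) :=
    Real.one_le_rpow hk (mul_nonneg ha.le hθ)
  -- key identity: I ^ (1/k) = (I ^ (1/(a*k))) ^ a
  have hid : (∫ ω, |x ω| ^ (a * k) ∂μ) ^ (1 / k)
      = ((∫ ω, |x ω| ^ (a * k) ∂μ) ^ (1 / (a * k))) ^ a := by
    rw [← Real.rpow_mul hInonneg]
    congr 1
    field_simp
  rw [hid]
  rcases le_or_gt 1 (a * k) with hak1 | hak1
  · -- large case: use hsw at a*k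
    have h1 := hsw (a * k) hak1
    have h2 : ((∫ ω, |x ω| ^ (a * k) ∂μ) ^ (1 / (a * k))) ^ a
        ≤ (ν * (a * k) ^ θ) ^ a :=
      Real.rpow_le_rpow (Real.rpow_nonneg hInonneg _) h1 ha.le
    refine h2.trans ?_
    have : (ν * (a * k) ^ θ) ^ a = ν ^ a * (a ^ (a * θ) * k ^ (a * θ)) := by
      rw [Real.mul_rpow hν.le (Real.rpow_nonneg hak.le _), ← Real.rpow_mul hak.le,
        mul_comm θ a, Real.mul_rpow ha.le hk0.le]
    rw [this]
    have hle : a ^ (a * θ) ≤ max 1 (a ^ (a * θ)) := le_max_right _ _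
    have : ν ^ a * (a ^ (a * θ) * k ^ (a * θ)) ≤ ν ^ a * (max 1 (a ^ (a * θ)) * k ^ (a * θ)) := by
      apply mul_le_mul_of_nonneg_left _ (Real.rpow_nonneg hν.le _)
      exact mul_le_mul_of_nonneg_right hle (Real.rpow_nonneg hk0.le _)
    linarith [this]
  · -- small case: a*k < 1, use Jensen (concavity of t ^ (a*k))
    have hx1 : Integrable (fun ω => |x ω|) μ := by
      simpa using hmom 1 le_rfl
    have hgi : Integrable (fun ω => |x ω| ^ (a * k)) μ := by
      apply Integrable.mono' (hx1.add (integrable_const 1))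
      · exact ((hx.abs.pow_const _)).aestronglyMeasurable
      · filter_upwards with ω
        simp only [Pi.add_apply]
        rw [Real.norm_eq_abs, abs_of_nonneg (Real.rpow_nonneg (abs_nonneg _) _)]
        rcases le_or_gt (|x ω|) 1 with h | h
        · have := Real.rpow_le_one (abs_nonneg _) h hak.le
          have h0 : (0:ℝ) ≤ |x ω| := abs_nonneg _
          linarith
        · have := Real.rpow_le_rpow_of_exponent_le h.le hak1.le
          rw [Real.rpow_one] at this
          have h0 : (0:ℝ) ≤ |x ω| := abs_nonneg _
          linarith
    have hjensen : (∫ ω, |x ω| ^ (a * k) ∂μ) ≤ (∫ ω, |x ω| ∂μ) ^ (a * k) := by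
      have hconc := Real.concaveOn_rpow hak.le hak1.le
      have hcont : ContinuousOn (fun t : ℝ => t ^ (a * k)) (Set.Ici 0) := fun t _ =>
        (Real.continuousAt_rpow_const t (a * k) (Or.inr hak.le)).continuousWithinAt
      exact hconc.le_map_integral hcont isClosed_Ici
        (Filter.Eventually.of_forall fun ω => Set.mem_Ici.mpr (abs_nonneg _)) hx1 hgi
    have hEx : (∫ ω, |x ω| ∂μ) ≤ ν := by
      have := hsw 1 le_rfl
      simpa using this
    have hEx0 : 0 ≤ ∫ ω, |x ω| ∂μ := integral_nonneg fun ω => abs_nonneg _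
    have hbound : (∫ ω, |x ω| ^ (a * k) ∂μ) ≤ ν ^ (a * k) :=
      hjensen.trans (Real.rpow_le_rpow hEx0 hEx hak.le)
    have h2 : ((∫ ω, |x ω| ^ (a * k) ∂μ) ^ (1 / (a * k))) ^ a
        ≤ (((ν ^ (a * k)) ^ (1 / (a * k))) : ℝ) ^ a := by
      apply Real.rpow_le_rpow (Real.rpow_nonneg hInonneg _) _ ha.le
      exact Real.rpow_le_rpow hInonneg hbound (by positivity)
    have h3 : (ν ^ (a * k)) ^ (1 / (a * k)) = ν := by
      rw [← Real.rpow_mul hν.le, mul_one_div, div_self hak.ne', Real.rpow_one]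
    rw [h3] at h2
    refine h2.trans ?_
    have hνa : 0 < ν ^ a := Real.rpow_pos_of_pos hν a
    calc ν ^ a = ν ^ a * 1 * 1 := by ring
      _ ≤ ν ^ a * max 1 (a ^ (a * θ)) * k ^ (a * θ) := by
        apply mul_le_mul (mul_le_mul le_rfl (le_max_left _ _) one_pos.le hνa.le) hkθ
          one_pos.le
        positivity
end

section
/- Consider the stochastic Banach–Picard iteration x_i^{ℓ+1} = (1 − u_i^ℓ) x_i^ℓ + u_i^ℓ T_i x^ℓ + u_i^ℓ e_i^ℓ under the stated stochastic framework, where T is ζ-quasi-contractive with ζ ∈ (0,1) and x* = (x₁*, …, x_n*) is a fixed point of T. Then for each coordinate i = 1, …, n and every ℓ ∈ ℕ: E[‖x_i^ℓ − x_i*‖_i] ≤ χ_i^ℓ ‖x_i⁰ − x_i*‖_i + p_i ((1 − χ_i^ℓ)/(1 − χ_i)) sup_ℓ μ_i^ℓ, where χ_i := 1 − p_i + p_i ζ. -/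
/-!
Pointwise, `‖x_i^{k+1} - x_i*‖ ≤ (1 - (1 - ζ) u_i^k) ‖x_i^k - x_i*‖ + u_i^k ‖e_i^k‖`. Unrolling this
linear recursion bounds the error at step `ℓ` by the initial error times a product of the factors
`1 - (1 - ζ) u_i^k`, plus, for each `t < ℓ`, the term `u_i^t ‖e_i^t‖` times the product of the
later factors. Independence of the `u^k` among themselves and of the error process factorizes the
expectation of every such product: each factor has mean `χ_i` and `u_i^t ‖e_i^t‖` has mean
`p_i μ_i^t`, which leaves a geometric sum.
-/

open MeasureTheory ProbabilityTheory Finset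

theorem le_prod_mul_add_sum_of_le_mul_add {d a b : ℕ → ℝ} (ha : ∀ k, 0 ≤ a k)
    (h : ∀ k, d (k + 1) ≤ a k * d k + b k) (ℓ : ℕ) :
    d ℓ ≤ (∏ k ∈ range ℓ, a k) * d 0 + ∑ t ∈ range ℓ, (∏ k ∈ Ico (t + 1) ℓ, a k) * b t := by
  induction ℓ with
  | zero => simp
  | succ ℓ ih =>
    have hIco : ∀ t ∈ range ℓ,
        (∏ k ∈ Ico (t + 1) (ℓ + 1), a k) * b t = a ℓ * ((∏ k ∈ Ico (t + 1) ℓ, a k) * b t) :=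
      fun t ht => by rw [prod_Ico_succ_top (mem_range.mp ht)]; ring
    rw [prod_range_succ, sum_range_succ, sum_congr rfl hIco, ← mul_sum, Ico_self, prod_empty]
    calc d (ℓ + 1) ≤ a ℓ * d ℓ + b ℓ := h ℓ
      _ ≤ a ℓ * ((∏ k ∈ range ℓ, a k) * d 0
            + ∑ t ∈ range ℓ, (∏ k ∈ Ico (t + 1) ℓ, a k) * b t) + b ℓ := by
        gcongr; exact ha ℓ
      _ = _ := by ring

theorem norm_relaxed_step_sub_le {E : Type*} [NormedAddCommGroup E] [NormedSpace ℝ E]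
    {c ζ : ℝ} (hc : c = 0 ∨ c = 1) {x y z e : E} (hz : ‖z - y‖ ≤ ζ * ‖x - y‖) :
    ‖(1 - c) • x + c • z + c • e - y‖ ≤ (1 - (1 - ζ) * c) * ‖x - y‖ + c * ‖e‖ := by
  rcases hc with rfl | rfl
  · simp
  · calc ‖(1 - 1 : ℝ) • x + (1 : ℝ) • z + (1 : ℝ) • e - y‖ = ‖(z - y) + e‖ := by
          rw [sub_self, zero_smul, zero_add, one_smul, one_smul, add_sub_right_comm]
      _ ≤ ‖z - y‖ + ‖e‖ := norm_add_le _ _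
      _ ≤ _ := by linarith

theorem integral_eq_of_eq_zero_or_eq_one {Ω : Type*} [MeasurableSpace Ω] {μ : Measure Ω}
    {f : Ω → ℝ} (hf : Measurable f) (h01 : ∀ ω, f ω = 0 ∨ f ω = 1) {p : ℝ} (hp : 0 ≤ p)
    (hP : μ {ω | f ω = 1} = ENNReal.ofReal p) :
    ∫ ω, f ω ∂μ = p := by
  have hf_ind : ∀ ω, f ω = {ω | f ω = 1}.indicator 1 ω := fun ω => by
    rcases h01 ω with h | h <;> simp [h]
  rw [integral_congr_ae (ae_of_all _ hf_ind),
    integral_indicator_one (s := {ω | f ω = 1}) (hf (measurableSet_singleton 1)),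
    measureReal_def, hP, ENNReal.toReal_ofReal hp]

theorem ProbabilityTheory.iIndepFun.integral_finset_prod {Ω ι 𝕜 : Type*} [RCLike 𝕜]
    [MeasurableSpace Ω] {μ : Measure Ω} {f : ι → Ω → 𝕜} (hf : iIndepFun f μ)
    (hm : ∀ k, AEStronglyMeasurable (f k) μ) (S : Finset ι) :
    ∫ ω, ∏ k ∈ S, f k ω ∂μ = ∏ k ∈ S, ∫ ω, f k ω ∂μ := by
  have h := (hf.precomp (g := ((↑) : S → ι)) Subtype.val_injective)
    |>.integral_fun_prod_eq_prod_integral fun k => hm k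
  simpa only [prod_coe_sort S (fun k => ∫ ω, f k ω ∂μ),
    fun ω => prod_coe_sort S (fun k => f k ω)] using h

theorem integrable_of_eq_zero_or_eq_one {Ω : Type*} [MeasurableSpace Ω] {μ : Measure Ω}
    [IsFiniteMeasure μ] {f : Ω → ℝ} (hf : Measurable f) (h01 : ∀ ω, f ω = 0 ∨ f ω = 1) :
    Integrable f μ :=
  .of_bound hf.aestronglyMeasurable 1 (ae_of_all _ fun ω => by rcases h01 ω with h | h <;> simp [h])

theorem one_sub_mul_mem_Icc {ζ x : ℝ} (hζ : ζ ∈ Set.Icc 0 1) (hx : x = 0 ∨ x = 1) :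
    1 - (1 - ζ) * x ∈ Set.Icc 0 1 := by
  rcases hx with rfl | rfl <;> simp only [Set.mem_Icc] <;> constructor <;> linarith [hζ.1, hζ.2]

theorem norm_prod_one_sub_mul_le_one {ι : Type*} {ζ : ℝ} (hζ : ζ ∈ Set.Icc 0 1) {x : ι → ℝ}
    (hx : ∀ k, x k = 0 ∨ x k = 1) (S : Finset ι) : ‖∏ k ∈ S, (1 - (1 - ζ) * x k)‖ ≤ 1 := by
  have hk := fun k => one_sub_mul_mem_Icc hζ (hx k)
  rw [Real.norm_eq_abs, abs_of_nonneg (prod_nonneg fun k _ => (hk k).1)]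
  exact prod_le_one (fun k _ => (hk k).1) fun k _ => (hk k).2

section RelaxedRecursion

variable {Ω : Type*} [MeasurableSpace Ω] {μ : Measure Ω} [IsProbabilityMeasure μ]
  {v ε : ℕ → Ω → ℝ} {ζ p : ℝ}

theorem integral_prod_one_sub_mul (hv : iIndepFun v μ) (hvm : ∀ k, Measurable (v k))
    (h01 : ∀ k ω, v k ω = 0 ∨ v k ω = 1) (hp : 0 ≤ p)
    (hP : ∀ k, μ {ω | v k ω = 1} = ENNReal.ofReal p) (S : Finset ℕ) :
    ∫ ω, ∏ k ∈ S, (1 - (1 - ζ) * v k ω) ∂μ = (1 - p + p * ζ) ^ S.card := by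
  have hmean : ∀ k, ∫ ω, (1 - (1 - ζ) * v k ω) ∂μ = 1 - p + p * ζ := fun k => by
    rw [integral_sub (integrable_const 1)
        ((integrable_of_eq_zero_or_eq_one (hvm k) (h01 k)).const_mul _),
      integral_const_mul, integral_eq_of_eq_zero_or_eq_one (hvm k) (h01 k) hp (hP k)]
    simp; ring
  have hindep : iIndepFun (fun k ω => 1 - (1 - ζ) * v k ω) μ :=
    hv.comp (fun _ x => 1 - (1 - ζ) * x) fun _ => by fun_prop
  rw [hindep.integral_finset_prod (fun k => by fun_prop) S]
  simp only [hmean, prod_const]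

theorem integral_prod_one_sub_mul_mul (hv : iIndepFun v μ) (hvm : ∀ k, Measurable (v k))
    (h01 : ∀ k ω, v k ω = 0 ∨ v k ω = 1) (hp : 0 ≤ p)
    (hP : ∀ k, μ {ω | v k ω = 1} = ENNReal.ofReal p) {S : Finset ℕ} {t : ℕ} (ht : t ∉ S) :
    ∫ ω, (∏ k ∈ S, (1 - (1 - ζ) * v k ω)) * v t ω ∂μ = (1 - p + p * ζ) ^ S.card * p := by
  have hindep : IndepFun (fun ω => ∏ k ∈ S, (1 - (1 - ζ) * v k ω)) (v t) μ := by
    have hφ : Measurable fun w : S → ℝ => ∏ k, (1 - (1 - ζ) * w k) := by fun_prop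
    have hψ : Measurable fun w : ({t} : Finset ℕ) → ℝ => w ⟨t, mem_singleton_self t⟩ :=
      measurable_pi_apply _
    have h := (hv.indepFun_finset S {t} (disjoint_singleton_right.mpr ht) hvm).comp hφ hψ
    convert h using 2 with ω
    · exact (prod_coe_sort S fun k => 1 - (1 - ζ) * v k ω).symm
    · rfl
  rw [hindep.integral_fun_mul_eq_mul_integral (by fun_prop) (hvm t).aestronglyMeasurable,
    integral_prod_one_sub_mul hv hvm h01 hp hP S,
    integral_eq_of_eq_zero_or_eq_one (hvm t) (h01 t) hp (hP t)]

theorem integral_prod_one_sub_mul_mul_mul (hv : iIndepFun v μ) (hvm : ∀ k, Measurable (v k))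
    (h01 : ∀ k ω, v k ω = 0 ∨ v k ω = 1) (hp : 0 ≤ p)
    (hP : ∀ k, μ {ω | v k ω = 1} = ENNReal.ofReal p)
    (hve : IndepFun (fun ω k => v k ω) (fun ω k => ε k ω) μ) {t : ℕ} (hε : Integrable (ε t) μ)
    {S : Finset ℕ} (ht : t ∉ S) :
    ∫ ω, (∏ k ∈ S, (1 - (1 - ζ) * v k ω)) * (v t ω * ε t ω) ∂μ
      = (1 - p + p * ζ) ^ S.card * p * ∫ ω, ε t ω ∂μ := by
  have hindep : IndepFun (fun ω => (∏ k ∈ S, (1 - (1 - ζ) * v k ω)) * v t ω) (ε t) μ :=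
    hve.comp (φ := fun w : ℕ → ℝ => (∏ k ∈ S, (1 - (1 - ζ) * w k)) * w t)
      (ψ := fun z : ℕ → ℝ => z t) (by fun_prop) (by fun_prop)
  simp_rw [← mul_assoc]
  rw [hindep.integral_fun_mul_eq_mul_integral (by fun_prop) hε.aestronglyMeasurable,
    integral_prod_one_sub_mul_mul hv hvm h01 hp hP ht]

theorem integral_le_of_le_relaxed_step (hζ : ζ ∈ Set.Icc 0 1) (hv : iIndepFun v μ)
    (hvm : ∀ k, Measurable (v k)) (h01 : ∀ k ω, v k ω = 0 ∨ v k ω = 1) (hp : 0 ≤ p)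
    (hP : ∀ k, μ {ω | v k ω = 1} = ENNReal.ofReal p)
    (hve : IndepFun (fun ω k => v k ω) (fun ω k => ε k ω) μ) (hε : ∀ k, Integrable (ε k) μ)
    {M : ℝ} (hεM : ∀ k, ∫ ω, ε k ω ∂μ ≤ M) {d : ℕ → Ω → ℝ} (hd_nonneg : ∀ k ω, 0 ≤ d k ω)
    {c : ℝ} (hd0 : ∀ ω, d 0 ω = c)
    (hd : ∀ k ω, d (k + 1) ω ≤ (1 - (1 - ζ) * v k ω) * d k ω + v k ω * ε k ω) (ℓ : ℕ) :
    ∫ ω, d ℓ ω ∂μ ≤ (1 - p + p * ζ) ^ ℓ * c + p * (∑ t ∈ range ℓ, (1 - p + p * ζ) ^ t) * M := by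
  set χ := 1 - p + p * ζ
  have hp1 : p ≤ 1 := ENNReal.ofReal_le_one.mp (hP 0 ▸ prob_le_one)
  have hχ : 0 ≤ χ := by nlinarith [hζ.1]
  have hunroll : ∀ ω, d ℓ ω ≤ (∏ k ∈ range ℓ, (1 - (1 - ζ) * v k ω)) * c
      + ∑ t ∈ range ℓ, (∏ k ∈ Ico (t + 1) ℓ, (1 - (1 - ζ) * v k ω)) * (v t ω * ε t ω) :=
    fun ω => by
      simpa only [hd0] using le_prod_mul_add_sum_of_le_mul_add (d := (d · ω))
        (b := fun k => v k ω * ε k ω) (fun k => (one_sub_mul_mem_Icc hζ (h01 k ω)).1)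
        (fun k => hd k ω) ℓ
  have hhead_int : Integrable (fun ω => (∏ k ∈ range ℓ, (1 - (1 - ζ) * v k ω)) * c) μ :=
    (integrable_const c).bdd_mul (by fun_prop)
      (ae_of_all _ fun ω => norm_prod_one_sub_mul_le_one hζ (h01 · ω) _)
  have hterm_int : ∀ S t, Integrable
      (fun ω => (∏ k ∈ S, (1 - (1 - ζ) * v k ω)) * (v t ω * ε t ω)) μ := fun S t =>
    ((hε t).bdd_mul (c := 1) (hvm t).aestronglyMeasurable
      (ae_of_all _ fun ω => by rcases h01 t ω with h | h <;> simp [h])).bdd_mul (by fun_prop)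
      (ae_of_all _ fun ω => norm_prod_one_sub_mul_le_one hζ (h01 · ω) S)
  have htail_int := integrable_finsetSum (range ℓ) fun t _ => hterm_int (Ico (t + 1) ℓ) t
  calc ∫ ω, d ℓ ω ∂μ
      ≤ ∫ ω, ((∏ k ∈ range ℓ, (1 - (1 - ζ) * v k ω)) * c
        + ∑ t ∈ range ℓ, (∏ k ∈ Ico (t + 1) ℓ, (1 - (1 - ζ) * v k ω)) * (v t ω * ε t ω)) ∂μ :=
        integral_mono_of_nonneg (ae_of_all _ (hd_nonneg ℓ)) (hhead_int.add htail_int)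
          (ae_of_all _ hunroll)
    _ = χ ^ ℓ * c + ∑ t ∈ range ℓ, χ ^ (ℓ - (t + 1)) * p * ∫ ω, ε t ω ∂μ := by
        rw [integral_add hhead_int htail_int, integral_mul_const,
          integral_prod_one_sub_mul hv hvm h01 hp hP, card_range,
          integral_finsetSum _ fun t _ => hterm_int _ t]
        congr 1
        refine sum_congr rfl fun t _ => ?_
        rw [integral_prod_one_sub_mul_mul_mul hv hvm h01 hp hP hve (hε t) (by simp), Nat.card_Ico]
    _ ≤ χ ^ ℓ * c + ∑ t ∈ range ℓ, χ ^ (ℓ - (t + 1)) * p * M := by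
        gcongr with t
        exact hεM t
    _ = χ ^ ℓ * c + p * (∑ t ∈ range ℓ, χ ^ t) * M := by
        rw [← sum_range_reflect (fun t => χ ^ t) ℓ, mul_sum, sum_mul]
        congr 1
        refine sum_congr rfl fun t _ => ?_
        rw [Nat.sub_sub, add_comm 1 t]
        ring

end RelaxedRecursion

theorem stochastic_banach_picard_contractive_mean_general
    {Ω : Type*} [MeasurableSpace Ω] (μ : Measure Ω) [IsProbabilityMeasure μ]
    {n : ℕ} (H : Fin n → Type*)
    [∀ i, NormedAddCommGroup (H i)] [∀ i, InnerProductSpace ℝ (H i)]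
    [∀ i, MeasurableSpace (H i)] [∀ i, BorelSpace (H i)]
    -- the operator: ζ-quasi-contractive with fixed point x*
    (T : (∀ i, H i) → ∀ i, H i) (ζ : ℝ) (hζ : ζ ∈ Set.Ioo (0 : ℝ) 1)
    (hT : ∀ x y : ∀ i, H i, T y = y → ∀ i, ‖T x i - y i‖ ≤ ζ * ‖x i - y i‖)
    (xstar : ∀ i, H i) (hxstar : T xstar = xstar)
    -- the random update indicators: i.i.d., {0,1}-valued, with P(u_i = 1) = p_i > 0
    (u : ℕ → Ω → Fin n → ℝ) (humeas : ∀ ℓ, Measurable (u ℓ))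
    (h01 : ∀ ℓ ω i, u ℓ ω i = 0 ∨ u ℓ ω i = 1)
    (p : Fin n → ℝ) (hp : ∀ i, 0 < p i)
    (hpP : ∀ ℓ i, μ {ω | u ℓ ω i = 1} = ENNReal.ofReal (p i))
    (huindep : iIndepFun u μ)
    -- the additive errors: integrable norms with mean m ℓ i, sup_ℓ m ℓ i < ∞
    (e : ℕ → Ω → ∀ i, H i)
    (m : ℕ → Fin n → ℝ)
    (heint : ∀ ℓ i, Integrable (fun ω => ‖e ℓ ω i‖) μ)
    (hm : ∀ ℓ i, ∫ ω, ‖e ℓ ω i‖ ∂μ = m ℓ i)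
    (hmbdd : ∀ i, BddAbove (Set.range fun ℓ => m ℓ i))
    -- the processes {u^ℓ} and {e^ℓ} are independent of each other
    (hue : IndepFun (fun ω => fun ℓ => u ℓ ω) (fun ω => fun ℓ => e ℓ ω) μ)
    -- the iteration, with deterministic initial condition x0
    (x0 : ∀ i, H i) (X : ℕ → Ω → ∀ i, H i)
    (hX0 : ∀ ω, X 0 ω = x0)
    (hXrec : ∀ ℓ ω i, X (ℓ + 1) ω i
      = (1 - u ℓ ω i) • X ℓ ω i + u ℓ ω i • T (X ℓ ω) i + u ℓ ω i • e ℓ ω i)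
    (ℓ : ℕ) (i : Fin n) :
    ∫ ω, ‖X ℓ ω i - xstar i‖ ∂μ
      ≤ (1 - p i + p i * ζ) ^ ℓ * ‖x0 i - xstar i‖
        + p i * ((1 - (1 - p i + p i * ζ) ^ ℓ) / (1 - (1 - p i + p i * ζ)))
            * (⨆ ℓ' : ℕ, m ℓ' i) := by
  obtain ⟨hζ0, hζ1⟩ := hζ
  have hχ : 1 - p i + p i * ζ < 1 := by nlinarith [hp i]
  have hu_indep : iIndepFun (fun k ω => u k ω i) μ :=
    huindep.comp (fun _ w => w i) fun _ => measurable_pi_apply i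
  have hue_i : IndepFun (fun ω k => u k ω i) (fun ω k => ‖e k ω i‖) μ :=
    hue.comp (φ := fun (w : ℕ → Fin n → ℝ) k => w k i)
      (ψ := fun (z : ℕ → ∀ i, H i) k => ‖z k i‖) (by fun_prop) (by fun_prop)
  have hstep : ∀ k ω, ‖X (k + 1) ω i - xstar i‖
      ≤ (1 - (1 - ζ) * u k ω i) * ‖X k ω i - xstar i‖ + u k ω i * ‖e k ω i‖ := fun k ω => by
    rw [hXrec]
    exact norm_relaxed_step_sub_le (h01 k ω i) (hT _ _ hxstar i)
  have hmean := integral_le_of_le_relaxed_step (d := fun k ω => ‖X k ω i - xstar i‖)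
    ⟨hζ0.le, hζ1.le⟩ hu_indep
    (fun k => (measurable_pi_apply i).comp (humeas k)) (fun k ω => h01 k ω i) (hp i).le
    (fun k => hpP k i) hue_i (fun k => heint k i)
    (fun k => (hm k i).trans_le (le_ciSup (hmbdd i) k)) (fun _ _ => norm_nonneg _)
    (fun ω => by rw [hX0]) hstep ℓ
  rwa [geom_sum_eq hχ.ne, ← neg_div_neg_eq, neg_sub, neg_sub] at hmean

/-- **Stochastic Banach–Picard iteration, quasi-contractive case: convergence in mean.**
For the iteration `x_i^{ℓ+1} = (1 − u_i^ℓ) x_i^ℓ + u_i^ℓ T_i x^ℓ + u_i^ℓ e_i^ℓ` on the direct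
sum of Hilbert spaces `H i`, with `T` ζ-quasi-contractive and fixed point `x*`, i.i.d.
update indicators `u^ℓ` with `P(u_i^ℓ = 1) = p_i > 0`, additive errors with
`E[‖e_i^ℓ‖] = μ_i^ℓ` and `{u^ℓ}` independent of `{e^ℓ}`, we have for every coordinate `i`
and every `ℓ`:
`E[‖x_i^ℓ − x_i*‖] ≤ χ_i^ℓ ‖x_i⁰ − x_i*‖ + p_i ((1 − χ_i^ℓ)/(1 − χ_i)) sup_ℓ μ_i^ℓ`,
where `χ_i := 1 − p_i + p_i ζ`. -/
theorem stochastic_banach_picard_contractive_mean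
    {Ω : Type*} [MeasurableSpace Ω] (μ : Measure Ω) [IsProbabilityMeasure μ]
    {n : ℕ} (H : Fin n → Type*)
    [∀ i, NormedAddCommGroup (H i)] [∀ i, InnerProductSpace ℝ (H i)]
    [∀ i, CompleteSpace (H i)] [∀ i, MeasurableSpace (H i)] [∀ i, BorelSpace (H i)]
    -- the operator: ζ-quasi-contractive with fixed point x*
    (T : (∀ i, H i) → ∀ i, H i) (ζ : ℝ) (hζ : ζ ∈ Set.Ioo (0 : ℝ) 1)
    (hT : ∀ x y : ∀ i, H i, T y = y → ∀ i, ‖T x i - y i‖ ≤ ζ * ‖x i - y i‖)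
    (xstar : ∀ i, H i) (hxstar : T xstar = xstar)
    -- the random update indicators: i.i.d., {0,1}-valued, with P(u_i = 1) = p_i > 0
    (u : ℕ → Ω → Fin n → ℝ) (humeas : ∀ ℓ, Measurable (u ℓ))
    (h01 : ∀ ℓ ω i, u ℓ ω i = 0 ∨ u ℓ ω i = 1)
    (p : Fin n → ℝ) (hp : ∀ i, 0 < p i)
    (hpP : ∀ ℓ i, μ {ω | u ℓ ω i = 1} = ENNReal.ofReal (p i))
    (huindep : iIndepFun u μ)
    (huid : ∀ ℓ ℓ', IdentDistrib (u ℓ) (u ℓ') μ μ)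
    -- the additive errors: integrable norms with mean m ℓ i, sup_ℓ m ℓ i < ∞
    (e : ℕ → Ω → ∀ i, H i) (hemeas : ∀ ℓ, Measurable (e ℓ))
    (m : ℕ → Fin n → ℝ)
    (heint : ∀ ℓ i, Integrable (fun ω => ‖e ℓ ω i‖) μ)
    (hm : ∀ ℓ i, ∫ ω, ‖e ℓ ω i‖ ∂μ = m ℓ i)
    (hmbdd : ∀ i, BddAbove (Set.range fun ℓ => m ℓ i))
    -- the processes {u^ℓ} and {e^ℓ} are independent of each other
    (hue : IndepFun (fun ω => fun ℓ => u ℓ ω) (fun ω => fun ℓ => e ℓ ω) μ)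
    -- the iteration, with deterministic initial condition x0
    (x0 : ∀ i, H i) (X : ℕ → Ω → ∀ i, H i)
    (hX0 : ∀ ω, X 0 ω = x0)
    (hXrec : ∀ ℓ ω i, X (ℓ + 1) ω i
      = (1 - u ℓ ω i) • X ℓ ω i + u ℓ ω i • T (X ℓ ω) i + u ℓ ω i • e ℓ ω i)
    (hXint : ∀ ℓ i, Integrable (fun ω => ‖X ℓ ω i - xstar i‖) μ)
    (ℓ : ℕ) (i : Fin n) :
    ∫ ω, ‖X ℓ ω i - xstar i‖ ∂μ
      ≤ (1 - p i + p i * ζ) ^ ℓ * ‖x0 i - xstar i‖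
        + p i * ((1 - (1 - p i + p i * ζ) ^ ℓ) / (1 - (1 - p i + p i * ζ)))
            * (⨆ ℓ' : ℕ, m ℓ' i) :=
  stochastic_banach_picard_contractive_mean_general μ H T ζ hζ hT xstar hxstar u humeas h01 p hp hpP
    huindep e m heint hm hmbdd hue x0 X hX0 hXrec ℓ i
end

section
/- Consider the stochastic Banach–Picard iteration x_i^{ℓ+1} = (1 − u_i^ℓ) x_i^ℓ + u_i^ℓ T_i x^ℓ + u_i^ℓ e_i^ℓ under the stated stochastic framework, where T : D → D is α-quasi-averaged on a non-empty bounded closed convex set D = D₁ ⊕ ⋯ ⊕ D_n, x* is a fixed point of T, the iterates satisfy x^ℓ ∈ D almost surely for all ℓ, and E[‖e_i^ℓ‖_i²] < ∞ with sup_ℓ (E[‖e_i^ℓ‖_i²] + 2 diam(D_i) μ_i^ℓ) < ∞. Then for each coordinate i = 1, …, n and every ℓ ∈ ℕ: E[ (1/(ℓ+1)) ∑_{h=0}^{ℓ} u_i^h ‖x_i^h − T_i x^h‖_i² ] ≤ (α/(1−α)) ( (1/(ℓ+1)) ‖x_i⁰ − x_i*‖_i² + p_i sup_ℓ ( E[‖e_i^ℓ‖_i²]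 + 2 diam(D_i) μ_i^ℓ ) ). -/
open MeasureTheory ProbabilityTheory Real

/-!
Write `R_h = ‖x_i^h − T_i x^h‖²`, `V_h = ‖x_i^h − x_i*‖²` and `c = (1 − α)/α`. If `u_i^h = 0`
nothing moves; if `u_i^h = 1`, quasi-averagedness together with `‖T_i x^h − x_i*‖ ≤ diam D_i`
and Cauchy–Schwarz give, almost surely,
`c u_i^h R_h ≤ V_h − V_{h+1} + u_i^h (‖e_i^h‖² + 2 diam(D_i) ‖e_i^h‖)`.
Summing telescopes the `V_h`; taking expectations, the independence of `u` and `e` turns each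
error term into `p_i (E‖e_i^h‖² + 2 diam(D_i) μ_i^h)`, which is at most `p_i` times the supremum.
-/

section Deterministic

variable {E : Type*} [NormedAddCommGroup E] [InnerProductSpace ℝ E]

theorem sq_norm_add_le_of_norm_le {a : E} {d : ℝ} (ha : ‖a‖ ≤ d) (e : E) :
    ‖a + e‖ ^ 2 ≤ ‖a‖ ^ 2 + (‖e‖ ^ 2 + 2 * d * ‖e‖) := by
  have hinner : inner ℝ a e ≤ d * ‖e‖ :=
    (real_inner_le_norm a e).trans (mul_le_mul_of_nonneg_right ha (norm_nonneg e))
  rw [norm_add_sq_real]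
  linarith

theorem mul_residual_le_of_relaxed_step {x Tx y : E} {c d t : ℝ} (ht : t = 0 ∨ t = 1)
    (hquasi : ‖Tx - y‖ ^ 2 ≤ ‖x - y‖ ^ 2 - c * ‖x - Tx‖ ^ 2) (hd : ‖Tx - y‖ ≤ d) (e : E) :
    c * (t * ‖x - Tx‖ ^ 2)
      ≤ ‖x - y‖ ^ 2 - ‖(1 - t) • x + t • Tx + t • e - y‖ ^ 2
        + t * (‖e‖ ^ 2 + 2 * d * ‖e‖) := by
  rcases ht with rfl | rfl
  · simp
  · have hnext := sq_norm_add_le_of_norm_le hd e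
    rw [sub_add_eq_add_sub] at hnext
    simp only [sub_self, zero_smul, one_smul, zero_add, one_mul]
    linarith

end Deterministic

theorem one_div_mul_le_of_mul_le_add {α N A K B : ℝ} (hα : α ∈ Set.Ioo 0 1) (hN : 0 < N)
    (h : (1 - α) / α * A ≤ K + N * B) :
    1 / N * A ≤ α / (1 - α) * (1 / N * K + B) := by
  obtain ⟨hα0, hα1⟩ := hα
  have hα1' : 0 < 1 - α := by linarith
  calc 1 / N * A = α / (1 - α) * (1 / N * ((1 - α) / α * A)) := by field_simp
    _ ≤ α / (1 - α) * (1 / N * (K + N * B)) := by gcongr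
    _ = α / (1 - α) * (1 / N * K + B) := by field_simp

theorem mul_sum_range_le_of_telescoping {r V w : ℕ → ℝ} {c : ℝ} {N : ℕ}
    (hstep : ∀ h < N, c * r h ≤ V h - V (h + 1) + w h) (hV : 0 ≤ V N) :
    c * ∑ h ∈ Finset.range N, r h ≤ V 0 + ∑ h ∈ Finset.range N, w h := by
  have hsum : ∑ h ∈ Finset.range N, c * r h
      ≤ ∑ h ∈ Finset.range N, (V h - V (h + 1) + w h) :=
    Finset.sum_le_sum fun h hh => hstep h (Finset.mem_range.1 hh)
  rw [← Finset.mul_sum, Finset.sum_add_distrib, Finset.sum_range_sub'] at hsum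
  linarith

section Probability

variable {Ω : Type*} [MeasurableSpace Ω] {μ : Measure Ω}

theorem MeasureTheory.Integrable.zero_one_mul {U g : Ω → ℝ} (hg : Integrable g μ)
    (hU : Measurable U) (h01 : ∀ ω, U ω = 0 ∨ U ω = 1) : Integrable (fun ω => U ω * g ω) μ :=
  hg.bdd_mul (c := 1) hU.aestronglyMeasurable <| .of_forall fun ω => by
    rcases h01 ω with h | h <;> simp [h]

theorem integral_eq_of_zero_or_one {U : Ω → ℝ} {p : ℝ} (hU : Measurable U)
    (h01 : ∀ ω, U ω = 0 ∨ U ω = 1) (hp : 0 ≤ p) (hpU : μ {ω | U ω = 1} = ENNReal.ofReal p) :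
    ∫ ω, U ω ∂μ = p := by
  have hindicator : U = Set.indicator {ω | U ω = 1} 1 := by
    funext ω
    rcases h01 ω with h | h <;> simp [Set.indicator, h]
  have hset : MeasurableSet {ω | U ω = 1} := hU (measurableSet_singleton 1)
  rw [hindicator, integral_indicator_one hset, measureReal_def,
    hpU, ENNReal.toReal_ofReal hp]

theorem integral_zero_one_mul_of_indepFun [IsProbabilityMeasure μ] {U g : Ω → ℝ} {p : ℝ}
    (hU : Measurable U) (h01 : ∀ ω, U ω = 0 ∨ U ω = 1) (hp : 0 ≤ p)
    (hpU : μ {ω | U ω = 1} = ENNReal.ofReal p) (hg : Integrable g μ) (hUg : IndepFun U g μ) :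
    ∫ ω, U ω * g ω ∂μ = p * ∫ ω, g ω ∂μ := by
  have hUint : Integrable U μ := by
    simpa using (integrable_const (1 : ℝ) (μ := μ)).zero_one_mul hU h01
  rw [← integral_eq_of_zero_or_one hU h01 hp hpU]
  exact hUg.integral_fun_mul_eq_mul_integral hUint.aestronglyMeasurable hg.aestronglyMeasurable

theorem integral_le_add_mul_of_ae_le_add_sum [IsProbabilityMeasure μ] {F : Ω → ℝ}
    {W : ℕ → Ω → ℝ} {K B : ℝ} {N : ℕ} (hF : Integrable F μ) (hW : ∀ h, Integrable (W h) μ)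
    (hWB : ∀ h, ∫ ω, W h ω ∂μ ≤ B) (hle : ∀ᵐ ω ∂μ, F ω ≤ K + ∑ h ∈ Finset.range N, W h ω) :
    ∫ ω, F ω ∂μ ≤ K + N * B := by
  have hsumW : Integrable (fun ω => ∑ h ∈ Finset.range N, W h ω) μ :=
    integrable_finsetSum _ fun h _ => hW h
  calc ∫ ω, F ω ∂μ ≤ ∫ ω, K + ∑ h ∈ Finset.range N, W h ω ∂μ :=
        integral_mono_ae hF ((integrable_const K).add hsumW) hle
    _ = K + ∑ h ∈ Finset.range N, ∫ ω, W h ω ∂μ := by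
        rw [integral_add (integrable_const K) hsumW, integral_const, probReal_univ, one_smul,
          integral_finsetSum _ fun h _ => hW h]
    _ ≤ K + ∑ _h ∈ Finset.range N, B := by gcongr with h; exact hWB h
    _ = K + N * B := by rw [Finset.sum_const, Finset.card_range, nsmul_eq_mul]

end Probability

theorem stochastic_banach_picard_averaged_mean_general
    {Ω : Type*} [MeasurableSpace Ω] (μ : Measure Ω) [IsProbabilityMeasure μ]
    {n : ℕ} (H : Fin n → Type*)
    [∀ i, NormedAddCommGroup (H i)] [∀ i, InnerProductSpace ℝ (H i)]
    [∀ i, MeasurableSpace (H i)] [∀ i, BorelSpace (H i)]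
    -- the domain: D = D₁ ⊕ ⋯ ⊕ D_n non-empty, bounded, closed, convex
    (D : ∀ i, Set (H i))
    (hDbdd : ∀ i, Bornology.IsBounded (D i))
    -- the operator: maps D into D and is α-quasi-averaged, with fixed point x* ∈ D
    (T : (∀ i, H i) → ∀ i, H i)
    (hTD : ∀ x : ∀ i, H i, (∀ i, x i ∈ D i) → ∀ i, T x i ∈ D i)
    (α : ℝ) (hα : α ∈ Set.Ioo (0 : ℝ) 1)
    (hT : ∀ x y : ∀ i, H i, (∀ i, x i ∈ D i) → T y = y → ∀ i,
      ‖T x i - y i‖ ^ 2 ≤ ‖x i - y i‖ ^ 2 - ((1 - α) / α) * ‖x i - T x i‖ ^ 2)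
    (xstar : ∀ i, H i) (hxstar : T xstar = xstar) (hxstarD : ∀ i, xstar i ∈ D i)
    -- the random update indicators: i.i.d., {0,1}-valued, with P(u_i = 1) = p_i > 0
    (u : ℕ → Ω → Fin n → ℝ) (humeas : ∀ ℓ, Measurable (u ℓ))
    (h01 : ∀ ℓ ω i, u ℓ ω i = 0 ∨ u ℓ ω i = 1)
    (p : Fin n → ℝ) (hp : ∀ i, 0 < p i)
    (hpP : ∀ ℓ i, μ {ω | u ℓ ω i = 1} = ENNReal.ofReal (p i))
    -- the additive errors: integrable first and second moments of the norms
    (e : ℕ → Ω → ∀ i, H i)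
    (m : ℕ → Fin n → ℝ)
    (heint : ∀ ℓ i, Integrable (fun ω => ‖e ℓ ω i‖) μ)
    (hm : ∀ ℓ i, ∫ ω, ‖e ℓ ω i‖ ∂μ = m ℓ i)
    (heint2 : ∀ ℓ i, Integrable (fun ω => ‖e ℓ ω i‖ ^ 2) μ)
    (hbdd : ∀ i, BddAbove (Set.range fun ℓ =>
      (∫ ω, ‖e ℓ ω i‖ ^ 2 ∂μ) + 2 * Metric.diam (D i) * m ℓ i))
    -- the processes {u^ℓ} and {e^ℓ} are independent of each other
    (hue : IndepFun (fun ω => fun ℓ => u ℓ ω) (fun ω => fun ℓ => e ℓ ω) μ)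
    -- the iteration, with deterministic initial condition x0 ∈ D,
    -- and iterates staying in D almost surely
    (x0 : ∀ i, H i)
    (X : ℕ → Ω → ∀ i, H i)
    (hX0 : ∀ ω, X 0 ω = x0)
    (hXrec : ∀ ℓ ω i, X (ℓ + 1) ω i
      = (1 - u ℓ ω i) • X ℓ ω i + u ℓ ω i • T (X ℓ ω) i + u ℓ ω i • e ℓ ω i)
    (hXD : ∀ ℓ, ∀ᵐ ω ∂μ, ∀ i, X ℓ ω i ∈ D i)
    (hFPRint : ∀ h i, Integrable (fun ω => ‖X h ω i - T (X h ω) i‖ ^ 2) μ)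
    (ℓ : ℕ) (i : Fin n) :
    ∫ ω, (1 / ((ℓ : ℝ) + 1))
        * ∑ h ∈ Finset.range (ℓ + 1), u h ω i * ‖X h ω i - T (X h ω) i‖ ^ 2 ∂μ
      ≤ (α / (1 - α))
        * ((1 / ((ℓ : ℝ) + 1)) * ‖x0 i - xstar i‖ ^ 2
          + p i * ⨆ ℓ' : ℕ,
              ((∫ ω, ‖e ℓ' ω i‖ ^ 2 ∂μ) + 2 * Metric.diam (D i) * m ℓ' i)) := by
  set c := (1 - α) / α
  set d := Metric.diam (D i)
  set S := ⨆ ℓ' : ℕ, ((∫ ω, ‖e ℓ' ω i‖ ^ 2 ∂μ) + 2 * d * m ℓ' i)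
  set g : ℕ → Ω → ℝ := fun h ω => ‖e h ω i‖ ^ 2 + 2 * d * ‖e h ω i‖
  have hui : ∀ h, Measurable fun ω => u h ω i := fun h => (measurable_pi_apply i).comp (humeas h)
  have hg : ∀ h, Integrable (g h) μ := fun h => (heint2 h i).add ((heint h i).const_mul _)
  have hstep : ∀ h, ∀ᵐ ω ∂μ, c * (u h ω i * ‖X h ω i - T (X h ω) i‖ ^ 2)
      ≤ ‖X h ω i - xstar i‖ ^ 2 - ‖X (h + 1) ω i - xstar i‖ ^ 2 + u h ω i * g h ω := fun h => by
    filter_upwards [hXD h] with ω hD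
    rw [hXrec]
    refine mul_residual_le_of_relaxed_step (h01 h ω i) (hT _ _ hD hxstar i) ?_ _
    rw [← dist_eq_norm]
    exact Metric.dist_le_diam_of_mem (hDbdd i) (hTD _ hD i) (hxstarD i)
  have hsum : ∀ᵐ ω ∂μ,
      c * ∑ h ∈ Finset.range (ℓ + 1), u h ω i * ‖X h ω i - T (X h ω) i‖ ^ 2
        ≤ ‖x0 i - xstar i‖ ^ 2 + ∑ h ∈ Finset.range (ℓ + 1), u h ω i * g h ω := by
    filter_upwards [ae_all_iff.2 hstep] with ω hω
    simpa only [hX0] using mul_sum_range_le_of_telescoping (fun h _ => hω h) (sq_nonneg _)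
  have herr : ∀ h, ∫ ω, u h ω i * g h ω ∂μ ≤ p i * S := fun h => by
    have hindep : IndepFun (fun ω => u h ω i) (g h) μ :=
      hue.comp (φ := fun v : ℕ → Fin n → ℝ => v h i)
        (ψ := fun w : ℕ → ∀ j, H j => ‖w h i‖ ^ 2 + 2 * d * ‖w h i‖)
        (by fun_prop) (by fun_prop)
    rw [integral_zero_one_mul_of_indepFun (hui h) (h01 h · i) (hp i).le (hpP h i) (hg h) hindep,
      integral_add (heint2 h i) ((heint h i).const_mul _), integral_const_mul, hm h i]
    exact mul_le_mul_of_nonneg_left (le_ciSup (hbdd i) h) (hp i).le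
  have hmean := integral_le_add_mul_of_ae_le_add_sum
    ((integrable_finsetSum _ fun h _ => (hFPRint h i).zero_one_mul (hui h) (h01 h · i)).const_mul c)
    (fun h => (hg h).zero_one_mul (hui h) (h01 h · i)) herr hsum
  rw [integral_const_mul] at hmean ⊢
  exact one_div_mul_le_of_mul_le_add hα (by positivity) (by exact_mod_cast hmean)

/-- **Stochastic Banach–Picard iteration, quasi-averaged case: mean cumulative
fixed-point residual.**
For the iteration `x_i^{ℓ+1} = (1 − u_i^ℓ) x_i^ℓ + u_i^ℓ T_i x^ℓ + u_i^ℓ e_i^ℓ` with `T : D → D`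
α-quasi-averaged on the non-empty bounded closed convex set `D = D₁ ⊕ ⋯ ⊕ D_n`, fixed point
`x*`, iterates staying in `D` a.s., for every coordinate `i` and every `ℓ`:
`E[(1/(ℓ+1)) ∑_{h≤ℓ} u_i^h ‖x_i^h − T_i x^h‖²]
  ≤ (α/(1−α)) ( (1/(ℓ+1)) ‖x_i⁰ − x_i*‖² + p_i sup_ℓ (E[‖e_i^ℓ‖²] + 2 diam(D_i) μ_i^ℓ) )`. -/
theorem stochastic_banach_picard_averaged_mean
    {Ω : Type*} [MeasurableSpace Ω] (μ : Measure Ω) [IsProbabilityMeasure μ]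
    {n : ℕ} (H : Fin n → Type*)
    [∀ i, NormedAddCommGroup (H i)] [∀ i, InnerProductSpace ℝ (H i)]
    [∀ i, CompleteSpace (H i)] [∀ i, MeasurableSpace (H i)] [∀ i, BorelSpace (H i)]
    -- the domain: D = D₁ ⊕ ⋯ ⊕ D_n non-empty, bounded, closed, convex
    (D : ∀ i, Set (H i))
    (hDne : ∀ i, (D i).Nonempty) (hDbdd : ∀ i, Bornology.IsBounded (D i))
    (hDcl : ∀ i, IsClosed (D i)) (hDcvx : ∀ i, Convex ℝ (D i))
    -- the operator: maps D into D and is α-quasi-averaged, with fixed point x* ∈ D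
    (T : (∀ i, H i) → ∀ i, H i)
    (hTD : ∀ x : ∀ i, H i, (∀ i, x i ∈ D i) → ∀ i, T x i ∈ D i)
    (α : ℝ) (hα : α ∈ Set.Ioo (0 : ℝ) 1)
    (hT : ∀ x y : ∀ i, H i, (∀ i, x i ∈ D i) → T y = y → ∀ i,
      ‖T x i - y i‖ ^ 2 ≤ ‖x i - y i‖ ^ 2 - ((1 - α) / α) * ‖x i - T x i‖ ^ 2)
    (xstar : ∀ i, H i) (hxstar : T xstar = xstar) (hxstarD : ∀ i, xstar i ∈ D i)
    -- the random update indicators: i.i.d., {0,1}-valued, with P(u_i = 1) = p_i > 0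
    (u : ℕ → Ω → Fin n → ℝ) (humeas : ∀ ℓ, Measurable (u ℓ))
    (h01 : ∀ ℓ ω i, u ℓ ω i = 0 ∨ u ℓ ω i = 1)
    (p : Fin n → ℝ) (hp : ∀ i, 0 < p i)
    (hpP : ∀ ℓ i, μ {ω | u ℓ ω i = 1} = ENNReal.ofReal (p i))
    (huindep : iIndepFun u μ)
    (huid : ∀ ℓ ℓ', IdentDistrib (u ℓ) (u ℓ') μ μ)
    -- the additive errors: integrable first and second moments of the norms
    (e : ℕ → Ω → ∀ i, H i) (hemeas : ∀ ℓ, Measurable (e ℓ))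
    (m : ℕ → Fin n → ℝ)
    (heint : ∀ ℓ i, Integrable (fun ω => ‖e ℓ ω i‖) μ)
    (hm : ∀ ℓ i, ∫ ω, ‖e ℓ ω i‖ ∂μ = m ℓ i)
    (heint2 : ∀ ℓ i, Integrable (fun ω => ‖e ℓ ω i‖ ^ 2) μ)
    (hbdd : ∀ i, BddAbove (Set.range fun ℓ =>
      (∫ ω, ‖e ℓ ω i‖ ^ 2 ∂μ) + 2 * Metric.diam (D i) * m ℓ i))
    -- the processes {u^ℓ} and {e^ℓ} are independent of each other
    (hue : IndepFun (fun ω => fun ℓ => u ℓ ω) (fun ω => fun ℓ => e ℓ ω) μ)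
    -- the iteration, with deterministic initial condition x0 ∈ D,
    -- and iterates staying in D almost surely
    (x0 : ∀ i, H i) (hx0D : ∀ i, x0 i ∈ D i)
    (X : ℕ → Ω → ∀ i, H i)
    (hX0 : ∀ ω, X 0 ω = x0)
    (hXrec : ∀ ℓ ω i, X (ℓ + 1) ω i
      = (1 - u ℓ ω i) • X ℓ ω i + u ℓ ω i • T (X ℓ ω) i + u ℓ ω i • e ℓ ω i)
    (hXD : ∀ ℓ, ∀ᵐ ω ∂μ, ∀ i, X ℓ ω i ∈ D i)
    (hFPRint : ∀ h i, Integrable (fun ω => ‖X h ω i - T (X h ω) i‖ ^ 2) μ)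
    (ℓ : ℕ) (i : Fin n) :
    ∫ ω, (1 / ((ℓ : ℝ) + 1))
        * ∑ h ∈ Finset.range (ℓ + 1), u h ω i * ‖X h ω i - T (X h ω) i‖ ^ 2 ∂μ
      ≤ (α / (1 - α))
        * ((1 / ((ℓ : ℝ) + 1)) * ‖x0 i - xstar i‖ ^ 2
          + p i * ⨆ ℓ' : ℕ,
              ((∫ ω, ‖e ℓ' ω i‖ ^ 2 ∂μ) + 2 * Metric.diam (D i) * m ℓ' i)) :=
  stochastic_banach_picard_averaged_mean_general μ H D hDbdd T hTD α hα hT xstar hxstar hxstarD u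
    humeas h01 p hp hpP e m heint hm heint2 hbdd hue x0 X hX0 hXrec hXD hFPRint ℓ i
end

section
/- Consider the stochastic Banach–Picard iteration with zero additive error, x_i^{ℓ+1} = (1 − u_i^ℓ) x_i^ℓ + u_i^ℓ T_i x^ℓ, under the stated stochastic framework, where T is ζ-quasi-contractive with ζ ∈ (0,1) and x* is a fixed point of T. Let ε ∈ (0, p_i]. Then for each coordinate i and every ℓ ∈ ℕ, with probability at least 1 − δ(ε, ℓ): ‖x_i^ℓ − x_i*‖_i ≤ ζ^{ℓ(p_i − ε)} ‖x_i⁰ − x_i*‖_i, where δ(ε, ℓ) := exp(−ℓ D(p_i − ε ‖ p_i)) and D(p_i − ε ‖ p_i) := (p_i − ε) log(1 − ε/p_i) + (1 − p_i + ε) log(1 + ε/(1 − p_i)). -/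
/-!
Along every trajectory the coordinate `i` is contracted by `ζ` exactly at the steps where it is
updated, so `‖x_i^ℓ - x_i*‖ ≤ ζ ^ S_ℓ ‖x_i⁰ - x_i*‖`, where `S_ℓ` is the number of updates of
coordinate `i` before step `ℓ`. It therefore suffices that `S_ℓ ≥ ℓ (p_i - ε)`, and the
probability of the complementary lower tail of the binomial count `S_ℓ` is bounded by the
Chernoff bound `exp (-ℓ D(p_i - ε ‖ p_i))`.
-/

open MeasureTheory ProbabilityTheory Real Finset

theorem norm_sub_le_rpow_sum_mul_of_update {E : Type*} [SeminormedAddCommGroup E] [Module ℝ E]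
    {x z : ℕ → E} {y : E} {u : ℕ → ℝ} {ζ : ℝ} (hζ : 0 < ζ) (hu : ∀ k, u k = 0 ∨ u k = 1)
    (hx : ∀ k, x (k + 1) = (1 - u k) • x k + u k • z k)
    (hz : ∀ k, ‖z k - y‖ ≤ ζ * ‖x k - y‖) (ℓ : ℕ) :
    ‖x ℓ - y‖ ≤ ζ ^ (∑ k ∈ range ℓ, u k) * ‖x 0 - y‖ := by
  induction ℓ with
  | zero => simp
  | succ ℓ ih =>
    rw [sum_range_succ, hx ℓ]
    rcases hu ℓ with h | h <;> rw [h]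
    · simpa using ih
    · calc ‖(1 - 1 : ℝ) • x ℓ + (1 : ℝ) • z ℓ - y‖ = ‖z ℓ - y‖ := by simp
        _ ≤ ζ * (ζ ^ (∑ k ∈ range ℓ, u k) * ‖x 0 - y‖) := (hz ℓ).trans (by gcongr)
        _ = ζ ^ (∑ k ∈ range ℓ, u k + 1) * ‖x 0 - y‖ := by rw [rpow_add_one hζ.ne']; ring

noncomputable def bernoulliKL (q p : ℝ) : ℝ :=
  q * log (q / p) + (1 - q) * log ((1 - q) / (1 - p))

lemma bernoulliKL_sub_left {p : ℝ} (hp : p ≠ 0) (ε : ℝ) :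
    bernoulliKL (p - ε) p = (p - ε) * log (1 - ε / p) + (1 - p + ε) * log (1 + ε / (1 - p)) := by
  have hleft : (p - ε) / p = 1 - ε / p := by field_simp
  rcases eq_or_ne p 1 with rfl | hp1
  · simp [bernoulliKL, hleft]
  · have hright : (1 - (p - ε)) / (1 - p) = 1 + ε / (1 - p) := by
      field_simp [sub_ne_zero.mpr hp1.symm]
      ring
    rw [bernoulliKL, hleft, hright]
    ring

/-- `eᵗ = (1 - p) q / (p (1 - q))` minimises the Chernoff exponent `-t q + log (1 - p + p eᵗ)`. -/
lemma exp_neg_mul_mul_bernoulli_mgf_eq {q p t : ℝ} (hq : 0 < q) (hq1 : q < 1) (hp : 0 < p)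
    (hp1 : p < 1) (ht : exp t = (1 - p) * q / (p * (1 - q))) :
    exp (-t * q) * (1 - p + p * exp t) = exp (-bernoulliKL q p) := by
  have h1q : 0 < 1 - q := by linarith
  have h1p : 0 < 1 - p := by linarith
  have hmgf : 1 - p + p * exp t = exp (log ((1 - p) / (1 - q))) := by
    rw [ht, exp_log (by positivity)]
    field_simp
    ring
  have ht' : t = log ((1 - p) * q / (p * (1 - q))) := by rw [← ht, log_exp]
  rw [hmgf, ← exp_add, bernoulliKL, ht']
  congr 1
  simp only [log_div, log_mul, hq.ne', hp.ne', h1q.ne', h1p.ne', mul_ne_zero, ne_eq,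
    not_false_eq_true]
  ring

lemma mgf_of_zero_or_one {Ω : Type*} [MeasurableSpace Ω] {μ : Measure Ω} [IsProbabilityMeasure μ]
    {f : Ω → ℝ} {p : ℝ} (hfm : Measurable f) (hf01 : ∀ ω, f ω = 0 ∨ f ω = 1)
    (hfp : μ {ω | f ω = 1} = ENNReal.ofReal p) (hp : 0 ≤ p) (t : ℝ) :
    mgf f μ t = 1 - p + p * exp t := by
  have hind : f = {ω | f ω = 1}.indicator 1 := by
    ext ω
    rcases hf01 ω with h | h <;> simp [h]
  have hset : MeasurableSet {ω | f ω = 1} := hfm (measurableSet_singleton 1)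
  have hexp : (fun ω ↦ exp (t * f ω)) = fun ω ↦ 1 + (exp t - 1) * f ω := by
    ext ω
    rcases hf01 ω with h | h <;> simp [h]
  have hint : Integrable f μ := hind ▸ (integrable_const 1).indicator hset
  have hmean : ∫ ω, f ω ∂μ = p := by
    rw [hind, integral_indicator_one hset, measureReal_def, hfp, ENNReal.toReal_ofReal hp]
  rw [mgf, hexp, integral_add (integrable_const 1) (hint.const_mul _), integral_const_mul, hmean]
  simp only [integral_const, probReal_univ, smul_eq_mul, mul_one]
  ring

lemma ofReal_one_sub_le_measure_ge_of_measure_le_le {Ω : Type*} [MeasurableSpace Ω]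
    {μ : Measure Ω} [IsProbabilityMeasure μ] {g : Ω → ℝ} {a δ : ℝ} (hδ : 0 ≤ δ)
    (h : μ {ω | g ω ≤ a} ≤ ENNReal.ofReal δ) :
    ENNReal.ofReal (1 - δ) ≤ μ {ω | a ≤ g ω} := by
  have hcover : 1 ≤ μ {ω | a ≤ g ω} + μ {ω | g ω ≤ a} :=
    calc 1 = μ Set.univ := measure_univ.symm
      _ ≤ μ ({ω | a ≤ g ω} ∪ {ω | g ω ≤ a}) := measure_mono fun ω _ ↦ le_total a (g ω)
      _ ≤ _ := measure_union_le _ _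
  rw [ENNReal.ofReal_sub _ hδ, ENNReal.ofReal_one, tsub_le_iff_right]
  exact hcover.trans (add_le_add_right h _)

theorem measure_sum_le_le_exp_neg_bernoulliKL {Ω : Type*} [MeasurableSpace Ω] {μ : Measure Ω}
    [IsProbabilityMeasure μ] {f : ℕ → Ω → ℝ} {p q : ℝ} (hf : iIndepFun f μ)
    (hfm : ∀ k, Measurable (f k)) (hf01 : ∀ k ω, f k ω = 0 ∨ f k ω = 1)
    (hfp : ∀ k, μ {ω | f k ω = 1} = ENNReal.ofReal p) (hq : 0 < q) (hqp : q ≤ p) (hp1 : p ≤ 1)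
    (ℓ : ℕ) :
    μ {ω | ∑ k ∈ range ℓ, f k ω ≤ ℓ * q} ≤ ENNReal.ofReal (exp (-ℓ * bernoulliKL q p)) := by
  rcases hp1.eq_or_lt with rfl | hp1
  -- `(1 - q) / (1 - 1) = 0`, so `D(q ‖ 1) = q log q ≤ 0` and the bound is at least `1`.
  · have hKL : bernoulliKL q 1 ≤ 0 := by
      simpa [bernoulliKL] using mul_nonpos_of_nonneg_of_nonpos hq.le (log_nonpos hq.le hqp)
    refine prob_le_one.trans (ENNReal.one_le_ofReal.mpr (one_le_exp ?_))
    nlinarith [(ℓ.cast_nonneg : (0 : ℝ) ≤ ℓ)]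
  set t := log ((1 - p) * q / (p * (1 - q)))
  have hp : 0 < p := hq.trans_le hqp
  have h1p : 0 < 1 - p := by linarith
  have h1q : 0 < 1 - q := by linarith
  have ht : t ≤ 0 := by
    refine log_nonpos (by positivity) ((div_le_one (by nlinarith)).mpr ?_)
    nlinarith
  have hint : Integrable (fun ω ↦ exp (t * (∑ k ∈ range ℓ, f k) ω)) μ := by
    refine hf.integrable_exp_mul_sum hfm fun k _ ↦ ?_
    exact integrable_exp_mul_of_mem_Icc (a := 0) (b := 1) (hfm k).aemeasurable
      (ae_of_all _ fun ω ↦ by rcases hf01 k ω with h | h <;> simp [h])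
  have hchernoff := measure_le_le_exp_mul_mgf (ℓ * q) ht hint
  rw [hf.mgf_sum hfm, prod_congr rfl fun k _ ↦ mgf_of_zero_or_one (hfm k) (hf01 k) (hfp k) hp.le t,
    prod_const, card_range] at hchernoff
  have hbound : exp (-t * (ℓ * q)) * (1 - p + p * exp t) ^ ℓ = exp (-ℓ * bernoulliKL q p) :=
    calc exp (-t * (ℓ * q)) * (1 - p + p * exp t) ^ ℓ
        = (exp (-t * q) * (1 - p + p * exp t)) ^ ℓ := by
          rw [mul_pow, ← exp_nat_mul]; ring_nf
      _ = exp (-bernoulliKL q p) ^ ℓ := by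
          rw [exp_neg_mul_mul_bernoulli_mgf_eq hq (hqp.trans_lt hp1) hp hp1 (exp_log (by positivity))]
      _ = exp (-ℓ * bernoulliKL q p) := by rw [← exp_nat_mul]; ring_nf
  simp only [Finset.sum_apply, hbound, measureReal_def] at hchernoff
  exact (ENNReal.le_ofReal_iff_toReal_le (measure_ne_top μ _) (exp_pos _).le).mpr hchernoff

theorem ofReal_one_sub_exp_neg_bernoulliKL_le_measure_le_sum {Ω : Type*} [MeasurableSpace Ω]
    {μ : Measure Ω} [IsProbabilityMeasure μ] {f : ℕ → Ω → ℝ} {p q : ℝ} (hf : iIndepFun f μ)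
    (hfm : ∀ k, Measurable (f k)) (hf01 : ∀ k ω, f k ω = 0 ∨ f k ω = 1)
    (hfp : ∀ k, μ {ω | f k ω = 1} = ENNReal.ofReal p) (hq : 0 ≤ q) (hqp : q ≤ p) (hp1 : p ≤ 1)
    (ℓ : ℕ) :
    ENNReal.ofReal (1 - exp (-ℓ * bernoulliKL q p)) ≤ μ {ω | ℓ * q ≤ ∑ k ∈ range ℓ, f k ω} := by
  rcases hq.eq_or_lt with rfl | hq
  · have huniv : {ω | ℓ * (0 : ℝ) ≤ ∑ k ∈ range ℓ, f k ω} = Set.univ :=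
      Set.eq_univ_of_forall fun ω ↦ by
        simpa using sum_nonneg fun k _ ↦ (hf01 k ω).elim (·.ge) fun h ↦ h ▸ zero_le_one
    rw [huniv, measure_univ]
    exact ENNReal.ofReal_le_one.mpr (sub_le_self _ (exp_pos _).le)
  · exact ofReal_one_sub_le_measure_ge_of_measure_le_le (exp_pos _).le
      (measure_sum_le_le_exp_neg_bernoulliKL hf hfm hf01 hfp hq hqp hp1 ℓ)

theorem stochastic_banach_picard_no_noise_contractive_general
    {Ω : Type*} [MeasurableSpace Ω] (μ : Measure Ω) [IsProbabilityMeasure μ]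
    {n : ℕ} (H : Fin n → Type*)
    [∀ i, NormedAddCommGroup (H i)] [∀ i, InnerProductSpace ℝ (H i)]
    -- the operator: ζ-quasi-contractive with fixed point x*
    (T : (∀ i, H i) → ∀ i, H i) (ζ : ℝ) (hζ : ζ ∈ Set.Ioo (0 : ℝ) 1)
    (hT : ∀ x y : ∀ i, H i, T y = y → ∀ i, ‖T x i - y i‖ ≤ ζ * ‖x i - y i‖)
    (xstar : ∀ i, H i) (hxstar : T xstar = xstar)
    -- the random update indicators: i.i.d., {0,1}-valued, with P(u_i = 1) = p_i > 0
    (u : ℕ → Ω → Fin n → ℝ) (humeas : ∀ ℓ, Measurable (u ℓ))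
    (h01 : ∀ ℓ ω i, u ℓ ω i = 0 ∨ u ℓ ω i = 1)
    (p : Fin n → ℝ)
    (hpP : ∀ ℓ i, μ {ω | u ℓ ω i = 1} = ENNReal.ofReal (p i))
    (huindep : iIndepFun u μ)
    -- the iteration with zero additive error, deterministic initial condition x0
    (x0 : ∀ i, H i) (X : ℕ → Ω → ∀ i, H i)
    (hX0 : ∀ ω, X 0 ω = x0)
    (hXrec : ∀ ℓ ω i, X (ℓ + 1) ω i
      = (1 - u ℓ ω i) • X ℓ ω i + u ℓ ω i • T (X ℓ ω) i)
    (ℓ : ℕ) (i : Fin n) (ε : ℝ) (hε : ε ∈ Set.Ioc (0 : ℝ) (p i)) :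
    ENNReal.ofReal (1 - Real.exp (-(ℓ : ℝ) *
        ((p i - ε) * Real.log (1 - ε / p i)
          + (1 - p i + ε) * Real.log (1 + ε / (1 - p i)))))
      ≤ μ {ω | ‖X ℓ ω i - xstar i‖
          ≤ ζ ^ ((ℓ : ℝ) * (p i - ε)) * ‖x0 i - xstar i‖} := by
  obtain ⟨hζ0, hζ1⟩ := hζ
  obtain ⟨hε0, hεp⟩ := hε
  have hp1 : p i ≤ 1 := ENNReal.ofReal_le_one.mp (hpP 0 i ▸ prob_le_one)
  have hcontract (ω : Ω) :
      ‖X ℓ ω i - xstar i‖ ≤ ζ ^ (∑ k ∈ range ℓ, u k ω i) * ‖x0 i - xstar i‖ := by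
    simpa [hX0] using norm_sub_le_rpow_sum_mul_of_update hζ0 (fun k ↦ h01 k ω i)
      (fun k ↦ hXrec k ω i) (fun k ↦ hT (X k ω) xstar hxstar i) ℓ
  have hevent : {ω | ℓ * (p i - ε) ≤ ∑ k ∈ range ℓ, u k ω i} ⊆
      {ω | ‖X ℓ ω i - xstar i‖ ≤ ζ ^ ((ℓ : ℝ) * (p i - ε)) * ‖x0 i - xstar i‖} :=
    fun ω hω ↦ (hcontract ω).trans <| mul_le_mul_of_nonneg_right
      (rpow_le_rpow_of_exponent_ge hζ0 hζ1.le hω) (norm_nonneg _)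
  rw [← bernoulliKL_sub_left (hε0.trans_le hεp).ne']
  refine le_trans ?_ (measure_mono hevent)
  exact ofReal_one_sub_exp_neg_bernoulliKL_le_measure_le_sum
    (huindep.comp (fun _ v ↦ v i) fun _ ↦ measurable_pi_apply i)
    (fun k ↦ (measurable_pi_apply i).comp (humeas k)) (fun k ω ↦ h01 k ω i) (fun k ↦ hpP k i)
    (sub_nonneg.mpr hεp) (by linarith) hp1 ℓ

/-- **Stochastic Banach–Picard without additive noise, quasi-contractive case.**
For the iteration `x_i^{ℓ+1} = (1 − u_i^ℓ) x_i^ℓ + u_i^ℓ T_i x^ℓ` with `T` ζ-quasi-contractive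
with fixed point `x*`, i.i.d. update indicators with `P(u_i^ℓ = 1) = p_i > 0`, and
`ε ∈ (0, p_i]`, for every coordinate `i` and every `ℓ`, with probability at least
`1 − δ(ε, ℓ)`: `‖x_i^ℓ − x_i*‖ ≤ ζ^{ℓ(p_i − ε)} ‖x_i⁰ − x_i*‖`, where
`δ(ε, ℓ) = exp(−ℓ D(p_i − ε ‖ p_i))` and
`D(p_i − ε ‖ p_i) = (p_i − ε) log(1 − ε/p_i) + (1 − p_i + ε) log(1 + ε/(1 − p_i))`. -/
theorem stochastic_banach_picard_no_noise_contractive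
    {Ω : Type*} [MeasurableSpace Ω] (μ : Measure Ω) [IsProbabilityMeasure μ]
    {n : ℕ} (H : Fin n → Type*)
    [∀ i, NormedAddCommGroup (H i)] [∀ i, InnerProductSpace ℝ (H i)]
    [∀ i, CompleteSpace (H i)] [∀ i, MeasurableSpace (H i)] [∀ i, BorelSpace (H i)]
    -- the operator: ζ-quasi-contractive with fixed point x*
    (T : (∀ i, H i) → ∀ i, H i) (ζ : ℝ) (hζ : ζ ∈ Set.Ioo (0 : ℝ) 1)
    (hT : ∀ x y : ∀ i, H i, T y = y → ∀ i, ‖T x i - y i‖ ≤ ζ * ‖x i - y i‖)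
    (xstar : ∀ i, H i) (hxstar : T xstar = xstar)
    -- the random update indicators: i.i.d., {0,1}-valued, with P(u_i = 1) = p_i > 0
    (u : ℕ → Ω → Fin n → ℝ) (humeas : ∀ ℓ, Measurable (u ℓ))
    (h01 : ∀ ℓ ω i, u ℓ ω i = 0 ∨ u ℓ ω i = 1)
    (p : Fin n → ℝ) (hp : ∀ i, 0 < p i)
    (hpP : ∀ ℓ i, μ {ω | u ℓ ω i = 1} = ENNReal.ofReal (p i))
    (huindep : iIndepFun u μ)
    (huid : ∀ ℓ ℓ', IdentDistrib (u ℓ) (u ℓ') μ μ)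
    -- the iteration with zero additive error, deterministic initial condition x0
    (x0 : ∀ i, H i) (X : ℕ → Ω → ∀ i, H i)
    (hX0 : ∀ ω, X 0 ω = x0)
    (hXrec : ∀ ℓ ω i, X (ℓ + 1) ω i
      = (1 - u ℓ ω i) • X ℓ ω i + u ℓ ω i • T (X ℓ ω) i)
    (ℓ : ℕ) (i : Fin n) (ε : ℝ) (hε : ε ∈ Set.Ioc (0 : ℝ) (p i)) :
    ENNReal.ofReal (1 - Real.exp (-(ℓ : ℝ) *
        ((p i - ε) * Real.log (1 - ε / p i)
          + (1 - p i + ε) * Real.log (1 + ε / (1 - p i)))))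
      ≤ μ {ω | ‖X ℓ ω i - xstar i‖
          ≤ ζ ^ ((ℓ : ℝ) * (p i - ε)) * ‖x0 i - xstar i‖} :=
  stochastic_banach_picard_no_noise_contractive_general μ H T ζ hζ hT xstar hxstar u humeas h01 p
    hpP huindep x0 X hX0 hXrec ℓ i ε hε
end
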